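/- arXiv:2508.13420 — 4 statements merged into one kernel-verified Lean document; each statement's English description precedes it below -/
import Mathlib

section
/- Let G be a compact abelian topological group whose topology is induced by a translation-invariant metric d, and let g₀ ∈ G be such that {n·g₀ : n ∈ ℕ} is dense in G. Let U₀, U₁ ⊆ G be disjoint open sets such that every point of B := G ∖ (U₀ ∪ U₁) lies in the closure of U₀ and in the closure of U₁. Let x : ℕ → Fin 2 satisfy n·g₀ ∈ U_{x(n)} for every n ∈ ℕ. Assume the separation property: for every ε > 0 there exists a finite window τ ⊆ ℕ such that for every w : τ → Fin 2 the set ⋂_{s ∈ τ} (U_{w(s)} − s·g₀) has diameter less than ε. If B contains at least k distinct elements (k ≥ 1), then there is a constant C ≥ 0 with p*_x(n) ≥ k·n − C for all n ≥ 1; in particular inf_{n≥1} (p*_x(n) − k·n) > −∞. -/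
/-!
A nonempty cell `⋂ s ∈ τ, (U (w s) - s • g₀)` of a window `τ` is open, so it contains a point
`m • g₀` of the dense orbit and `w` occurs in `x` at `m`; hence `p*_x(#τ)` bounds the number of
nonempty cells. Grow `τ` one time `t` at a time, choosing `t` (again by density of the orbit) so
that every `b - t • g₀ + s • g₀` with `b ∈ F`, `s ∈ τ` avoids the boundary. Every nonempty cell
then has a nonempty extension at `t`, and the cell containing `b - t • g₀` has two, because `b`
lies in the closure of both `U i`. Once `τ` contains a window whose cells are thinner than the
separation of `F`, these `k` cells are distinct, so each step adds at least `k` nonempty cells.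
-/

open Set

abbrev Seq2 := ℕ → Fin 2

def patLang (x : Seq2) (τ : Finset ℕ) : Set ((s : τ) → Fin 2) :=
  {w | ∃ m : ℕ, ∀ s : τ, w s = x (m + (s : ℕ))}

noncomputable def pstar (x : Seq2) (n : ℕ) : ℕ :=
  sSup {c : ℕ | ∃ τ : Finset ℕ, τ.card = n ∧ (patLang x τ).ncard = c}

open Finset

section Extend

variable {α β : Type*} [DecidableEq α] {τ : Finset α} {a : α}

def extendAt (a : α) (w : τ → β) (b : β) : ↥(insert a τ) → β :=
  fun s => if h : (s : α) ∈ τ then w ⟨s, h⟩ else b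

lemma extendAt_of_mem {w : τ → β} {b : β} {s : α} (hs : s ∈ τ) (h : s ∈ insert a τ) :
    extendAt a w b ⟨s, h⟩ = w ⟨s, hs⟩ :=
  dif_pos hs

lemma extendAt_self (ha : a ∉ τ) {w : τ → β} {b : β} (h : a ∈ insert a τ) :
    extendAt a w b ⟨a, h⟩ = b :=
  dif_neg ha

lemma extendAt_inj (ha : a ∉ τ) {w w' : τ → β} {b b' : β} :
    extendAt a w b = extendAt a w' b' ↔ w = w' ∧ b = b' := by
  refine ⟨fun h => ⟨funext fun s => ?_, ?_⟩, fun h => h.1 ▸ h.2 ▸ rfl⟩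
  · simpa only [extendAt_of_mem s.2] using congrFun h ⟨s, mem_insert_of_mem s.2⟩
  · simpa only [extendAt_self ha] using congrFun h ⟨a, mem_insert_self a τ⟩

/-- Over `Fin 2`, the number of letters `i` with `P (extendAt a w i)` is
`[∃ i, P _] + [∀ i, P _]`; summing over `w` gives the bound. -/
lemma card_filter_exists_add_card_filter_forall_le (ha : a ∉ τ)
    (P : (↥(insert a τ) → Fin 2) → Prop) [DecidablePred P] :
    #{w : τ → Fin 2 | ∃ i, P (extendAt a w i)} + #{w : τ → Fin 2 | ∀ i, P (extendAt a w i)} ≤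
      #{w | P w} := by
  set S : Fin 2 → Finset (τ → Fin 2) := fun i => {w | P (extendAt a w i)}
  have hS : ∀ i, #(S i) = #((S i).image (extendAt a · i)) := fun i =>
    (card_image_of_injOn fun _ _ _ _ h => ((extendAt_inj ha).1 h).1).symm
  have hdisj : Disjoint ((S 0).image (extendAt a · 0)) ((S 1).image (extendAt a · 1)) := by
    simp only [Finset.disjoint_left, Finset.mem_image]
    rintro _ ⟨w, -, rfl⟩ ⟨w', -, h⟩
    exact absurd ((extendAt_inj ha).1 h).2 (by decide)
  calc _ = #(S 0 ∪ S 1) + #(S 0 ∩ S 1) := by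
        simp only [S, Fin.exists_fin_two, Fin.forall_fin_two, Finset.filter_or, Finset.filter_and]
    _ = #((S 0).image (extendAt a · 0) ∪ (S 1).image (extendAt a · 1)) := by
        rw [Finset.card_union_add_card_inter, Finset.card_union_of_disjoint hdisj, hS, hS]
    _ ≤ #{w | P w} := Finset.card_le_card <| Finset.union_subset
        (by simp [Finset.image_subset_iff, S]) (by simp [Finset.image_subset_iff, S])

end Extend

section Topology

variable {X : Type*} [TopologicalSpace X]

lemma dense_biInter_finset_of_isOpen {ι : Type*} {s : Finset ι} {f : ι → Set X}
    (ho : ∀ i ∈ s, IsOpen (f i)) (hd : ∀ i ∈ s, Dense (f i)) : Dense (⋂ i ∈ s, f i) := by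
  classical
  induction s using Finset.induction_on with
  | empty => simp
  | insert i s _ ih =>
    simp only [Finset.mem_insert, forall_eq_or_imp] at ho hd
    rw [Finset.set_biInter_insert]
    exact (hd.1.inter_of_isOpen_left (ih ho.2 hd.2) ho.1)

lemma dense_of_compl_subset_closure {s : Set X} (h : sᶜ ⊆ closure s) : Dense s := fun g =>
  (em (g ∈ s)).elim (fun hg => subset_closure hg) (fun hg => h hg)

end Topology

lemma nhdsNE_neBot_of_dense {G : Type*} [AddGroup G] [TopologicalSpace G]
    [IsTopologicalAddGroup G] {O : Set G} (hO : Dense O) (hO' : Oᶜ.Nonempty) (g : G) :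
    Filter.NeBot (nhdsWithin g {g}ᶜ) := by
  rw [Filter.neBot_iff, Ne, ← isOpen_singleton_iff_punctured_nhds]
  intro hg
  have : DiscreteTopology G := discreteTopology_of_isOpen_singleton_zero <| by
    simpa using hg.preimage (continuous_add_const g)
  obtain ⟨b, hb⟩ := hO'
  obtain ⟨_, hbO, rfl⟩ := hO.exists_mem_open (isOpen_discrete {b}) ⟨b, rfl⟩
  exact hb hbO

lemma eq_of_mem_of_mem_of_disjoint {α : Type*} {U : Fin 2 → Set α} (hdisj : Disjoint (U 0) (U 1))
    {a : α} {i j : Fin 2} (hi : a ∈ U i) (hj : a ∈ U j) : i = j := by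
  by_contra hij
  obtain ⟨rfl, rfl⟩ | ⟨rfl, rfl⟩ : (i = 0 ∧ j = 1) ∨ (i = 1 ∧ j = 0) := by omega
  exacts [disjoint_left.1 hdisj hi hj, disjoint_left.1 hdisj hj hi]

section Cells

variable {G : Type*} [AddGroup G] {U : Fin 2 → Set G} {g₀ : G}

def cell (U : Fin 2 → Set G) (g₀ : G) (τ : Finset ℕ) (w : τ → Fin 2) : Set G :=
  ⋂ s : τ, (fun u : G => u - (s : ℕ) • g₀) '' U (w s)

lemma mem_cell {τ : Finset ℕ} {w : τ → Fin 2} {g : G} :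
    g ∈ cell U g₀ τ w ↔ ∀ s : τ, g + (s : ℕ) • g₀ ∈ U (w s) := by
  simp [cell, image_sub_right]

lemma cell_extendAt {τ : Finset ℕ} {t : ℕ} (ht : t ∉ τ) (w : τ → Fin 2) (i : Fin 2) :
    cell U g₀ (insert t τ) (extendAt t w i) = cell U g₀ τ w ∩ (· + t • g₀) ⁻¹' U i := by
  ext g
  simp only [mem_cell, mem_inter_iff, Set.mem_preimage, Subtype.forall, Finset.mem_insert]
  constructor
  · intro h
    refine ⟨fun s hs => ?_, ?_⟩
    · simpa only [extendAt_of_mem hs] using h s (Or.inr hs)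
    · simpa only [extendAt_self ht] using h t (Or.inl rfl)
  · rintro ⟨h, hi⟩ s (rfl | hs)
    · rwa [extendAt_self ht]
    · rw [extendAt_of_mem hs]
      exact h s hs

lemma cell_subset_cell_restrict {τ₀ τ : Finset ℕ} (h : τ₀ ⊆ τ) (w : τ → Fin 2) :
    cell U g₀ τ w ⊆ cell U g₀ τ₀ (fun s => w ⟨s, h s.2⟩) :=
  fun _ hg => mem_cell.2 fun s => mem_cell.1 hg ⟨s, h s.2⟩

open scoped Classical in
noncomputable def itinerary (U : Fin 2 → Set G) (g₀ : G) (τ : Finset ℕ) (g : G) : τ → Fin 2 :=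
  fun s => if g + (s : ℕ) • g₀ ∈ U 0 then 0 else 1

lemma mem_cell_itinerary {τ : Finset ℕ} {g : G} (h : ∀ s ∈ τ, g + s • g₀ ∈ U 0 ∪ U 1) :
    g ∈ cell U g₀ τ (itinerary U g₀ τ g) := by
  refine mem_cell.2 fun s => ?_
  unfold itinerary
  split_ifs with h0
  · exact h0
  · exact (h s s.2).resolve_left h0

open scoped Classical in
noncomputable def admissible (U : Fin 2 → Set G) (g₀ : G) (τ : Finset ℕ) : Finset (τ → Fin 2) :=
  {w | (cell U g₀ τ w).Nonempty}

def IsSeparatingWindow (U : Fin 2 → Set G) (g₀ : G) (F : Set G) (τ : Finset ℕ) : Prop :=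
  ∀ (w : τ → Fin 2) (c : G), {b ∈ F | b - c ∈ cell U g₀ τ w}.Subsingleton

lemma IsSeparatingWindow.mono {F : Set G} {τ₀ τ : Finset ℕ} (h : IsSeparatingWindow U g₀ F τ₀)
    (hsub : τ₀ ⊆ τ) : IsSeparatingWindow U g₀ F τ := fun w c =>
  (h _ c).anti fun _ hb => ⟨hb.1, cell_subset_cell_restrict hsub w hb.2⟩

lemma IsSeparatingWindow.injOn_itinerary {F : Set G} {τ : Finset ℕ} {c : G}
    (h : IsSeparatingWindow U g₀ F τ) (hgood : ∀ b ∈ F, ∀ s ∈ τ, b - c + s • g₀ ∈ U 0 ∪ U 1) :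
    InjOn (fun b => itinerary U g₀ τ (b - c)) F := fun b hb b' hb' hbb' =>
  h (itinerary U g₀ τ (b - c)) c ⟨hb, mem_cell_itinerary (hgood b hb)⟩
    ⟨hb', (show itinerary U g₀ τ (b - c) = _ from hbb') ▸ mem_cell_itinerary (hgood b' hb')⟩

section Topological

variable [TopologicalSpace G] [IsTopologicalAddGroup G]

lemma isOpen_cell (hopen : ∀ i, IsOpen (U i)) (τ : Finset ℕ) (w : τ → Fin 2) :
    IsOpen (cell U g₀ τ w) := by
  simp only [cell, image_sub_right]
  exact isOpen_iInter_of_finite fun s => (hopen _).preimage (continuous_add_const _)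

lemma mem_patLang_of_cell_nonempty (hdense : Dense {g : G | ∃ n : ℕ, g = n • g₀})
    (hopen : ∀ i, IsOpen (U i)) (hdisj : Disjoint (U 0) (U 1))
    {x : Seq2} (hx : ∀ n : ℕ, n • g₀ ∈ U (x n)) {τ : Finset ℕ} {w : τ → Fin 2}
    (hne : (cell U g₀ τ w).Nonempty) : w ∈ patLang x τ := by
  obtain ⟨_, ⟨m, rfl⟩, hm⟩ := hdense.exists_mem_open (isOpen_cell hopen τ w) hne
  refine ⟨m, fun s => ?_⟩
  have hms := mem_cell.1 hm s
  rw [← add_nsmul] at hms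
  exact eq_of_mem_of_mem_of_disjoint hdisj hms (hx _)

lemma card_admissible_le_ncard_patLang (hdense : Dense {g : G | ∃ n : ℕ, g = n • g₀})
    (hopen : ∀ i, IsOpen (U i)) (hdisj : Disjoint (U 0) (U 1))
    {x : Seq2} (hx : ∀ n : ℕ, n • g₀ ∈ U (x n)) (τ : Finset ℕ) :
    #(admissible U g₀ τ) ≤ (patLang x τ).ncard := by
  rw [← ncard_coe_finset]
  refine ncard_le_ncard (fun w hw => ?_) (toFinite _)
  simp only [admissible, coe_filter, Finset.mem_univ, true_and, mem_ofPred_eq] at hw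
  exact mem_patLang_of_cell_nonempty hdense hopen hdisj hx hw

lemma exists_cell_extendAt_nonempty (hopen : ∀ i, IsOpen (U i)) (hO : Dense (U 0 ∪ U 1))
    {τ : Finset ℕ} {t : ℕ} (ht : t ∉ τ) {w : τ → Fin 2} (hne : (cell U g₀ τ w).Nonempty) :
    ∃ i, (cell U g₀ (insert t τ) (extendAt t w i)).Nonempty := by
  have := (hO.preimage (isOpenMap_add_right (t • g₀))).inter_open_nonempty _
    (isOpen_cell hopen τ w) hne
  rw [preimage_union, inter_union_distrib_left] at this
  simp only [cell_extendAt ht, Fin.exists_fin_two]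
  exact union_nonempty.1 this

lemma cell_extendAt_nonempty (hopen : ∀ i, IsOpen (U i)) {τ : Finset ℕ} {t : ℕ} (ht : t ∉ τ)
    {w : τ → Fin 2} {b : G} (hb : ∀ i, b ∈ closure (U i)) (hbw : b - t • g₀ ∈ cell U g₀ τ w)
    (i : Fin 2) : (cell U g₀ (insert t τ) (extendAt t w i)).Nonempty := by
  obtain ⟨h, hhw, hhi⟩ := _root_.mem_closure_iff.1 (hb i) _
    ((isOpen_cell hopen τ w).preimage (continuous_sub_right (t • g₀))) hbw
  rw [cell_extendAt ht]
  exact ⟨h - t • g₀, hhw, by simpa using hhi⟩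

lemma exists_notMem_forall_sub_add_mem [T1Space G] {O : Set G} (hO : IsOpen O) (hOd : Dense O)
    (hO' : Oᶜ.Nonempty) (hdense : Dense {g : G | ∃ n : ℕ, g = n • g₀}) (F : Finset G)
    (τ : Finset ℕ) : ∃ t ∉ τ, ∀ b ∈ F, ∀ s ∈ τ, b - t • g₀ + s • g₀ ∈ O := by
  have := nhdsNE_neBot_of_dense hOd hO'
  have hopen : ∀ b (s : ℕ), IsOpen {g : G | b - g + s • g₀ ∈ O} := fun b s =>
    hO.preimage ((continuous_add_const (s • g₀)).comp (continuous_sub_left b))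
  have hdense' : ∀ b (s : ℕ), Dense {g : G | b - g + s • g₀ ∈ O} := fun b s =>
    hOd.preimage ((isOpenMap_add_right _).comp (isOpenMap_sub_left b))
  set W := ⋂ s ∈ τ, ({s • g₀}ᶜ ∩ ⋂ b ∈ F, {g : G | b - g + s • g₀ ∈ O})
  have hWo : IsOpen W := isOpen_biInter_finset fun s _ =>
    isOpen_compl_singleton.inter (isOpen_biInter_finset fun b _ => hopen b s)
  have hWd : Dense W := dense_biInter_finset_of_isOpen
    (fun s _ => isOpen_compl_singleton.inter (isOpen_biInter_finset fun b _ => hopen b s))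
    (fun s _ => (dense_compl_singleton _).inter_of_isOpen_left
      (dense_biInter_finset_of_isOpen (fun b _ => hopen b s) (fun b _ => hdense' b s))
      isOpen_compl_singleton)
  obtain ⟨_, ⟨t, rfl⟩, ht⟩ := hdense.exists_mem_open hWo hWd.nonempty
  simp only [W, mem_iInter, mem_inter_iff, mem_compl_iff, mem_singleton_iff, mem_ofPred_eq] at ht
  exact ⟨t, fun hτ => (ht t hτ).1 rfl, fun b hb s hs => (ht s hs).2 b hb⟩

lemma exists_card_admissible_insert [T1Space G] (hopen : ∀ i, IsOpen (U i))
    (hbd : ∀ b ∈ (U 0 ∪ U 1)ᶜ, b ∈ closure (U 0) ∧ b ∈ closure (U 1))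
    (hdense : Dense {g : G | ∃ n : ℕ, g = n • g₀}) {F : Finset G} (hF : ↑F ⊆ (U 0 ∪ U 1)ᶜ)
    (hFne : F.Nonempty) {τ : Finset ℕ} (hsep : IsSeparatingWindow U g₀ F τ) :
    ∃ t ∉ τ, #(admissible U g₀ τ) + #F ≤ #(admissible U g₀ (insert t τ)) := by
  classical
  have hO : Dense (U 0 ∪ U 1) := dense_of_compl_subset_closure fun b hb =>
    closure_mono subset_union_left (hbd b hb).1
  obtain ⟨b₀, hb₀⟩ := hFne
  obtain ⟨t, ht, hgood⟩ := exists_notMem_forall_sub_add_mem ((hopen 0).union (hopen 1)) hO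
    ⟨b₀, hF hb₀⟩ hdense F τ
  refine ⟨t, ht, le_trans (add_le_add ?_ ?_)
    (card_filter_exists_add_card_filter_forall_le ht fun w => (cell U g₀ _ w).Nonempty)⟩
  · refine Finset.card_le_card fun w hw => ?_
    simp only [admissible, Finset.mem_filter, Finset.mem_univ, true_and] at hw ⊢
    exact exists_cell_extendAt_nonempty hopen hO ht hw
  · refine card_le_card_of_injOn (fun b => itinerary U g₀ τ (b - t • g₀)) (fun b hb => ?_)
      (hsep.injOn_itinerary hgood)
    have hb' := hbd b (hF hb)
    simp only [coe_filter, Finset.mem_univ, true_and, mem_ofPred_eq]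
    exact cell_extendAt_nonempty hopen ht (Fin.forall_fin_two.2 hb')
      (mem_cell_itinerary (hgood b hb))

lemma exists_card_admissible_ge [T1Space G] (hopen : ∀ i, IsOpen (U i))
    (hbd : ∀ b ∈ (U 0 ∪ U 1)ᶜ, b ∈ closure (U 0) ∧ b ∈ closure (U 1))
    (hdense : Dense {g : G | ∃ n : ℕ, g = n • g₀}) {F : Finset G} (hF : ↑F ⊆ (U 0 ∪ U 1)ᶜ)
    (hFne : F.Nonempty) {τ₀ : Finset ℕ} (hsep : IsSeparatingWindow U g₀ F τ₀) (j : ℕ) :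
    ∃ τ, τ₀ ⊆ τ ∧ #τ = #τ₀ + j ∧ #F * j ≤ #(admissible U g₀ τ) := by
  induction j with
  | zero => exact ⟨τ₀, subset_rfl, rfl, by simp⟩
  | succ j ih =>
    obtain ⟨τ, hsub, hcard, hA⟩ := ih
    obtain ⟨t, ht, hA'⟩ := exists_card_admissible_insert hopen hbd hdense hF hFne (hsep.mono hsub)
    refine ⟨insert t τ, hsub.trans (subset_insert _ _),
      by rw [card_insert_of_notMem ht, hcard, add_assoc], ?_⟩
    rw [mul_add_one]
    omega

end Topological

end Cells

lemma ncard_patLang_le_pstar (x : Seq2) (τ : Finset ℕ) : (patLang x τ).ncard ≤ pstar x #τ := by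
  refine le_csSup ⟨2 ^ #τ, ?_⟩ ⟨τ, rfl, rfl⟩
  rintro _ ⟨σ, hσ, rfl⟩
  exact (ncard_le_card _).trans (by simp [hσ])

lemma Set.Finite.exists_pos_forall_eq_of_dist_lt {α : Type*} [MetricSpace α] {s : Set α}
    (hs : s.Finite) : ∃ ε > 0, ∀ x ∈ s, ∀ y ∈ s, dist x y < ε → x = y := by
  by_cases h : s.Nontrivial
  · exact ⟨s.infsep, hs.infsep_pos_iff_nontrivial.2 h, fun x hx y hy hxy =>
      by_contra fun hne => (infsep_le_dist_of_mem hx hy hne).not_gt hxy⟩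
  · exact ⟨1, one_pos, fun x hx y hy _ => not_nontrivial_iff.1 h hx hy⟩

lemma isSeparatingWindow_of_diam_lt {G : Type*} [AddGroup G] [MetricSpace G] [BoundedSpace G]
    (hinvdist : ∀ a b c : G, dist (a + c) (b + c) = dist a b) {U : Fin 2 → Set G} {g₀ : G}
    {F : Set G} {ε : ℝ} (hF : ∀ x ∈ F, ∀ y ∈ F, dist x y < ε → x = y) {τ : Finset ℕ}
    (hτ : ∀ w, Metric.diam (cell U g₀ τ w) < ε) : IsSeparatingWindow U g₀ F τ := by
  rintro w c b ⟨hb, hbc⟩ b' ⟨hb', hbc'⟩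
  refine hF b hb b' hb' ?_
  calc dist b b' = dist (b - c) (b' - c) := by simpa using hinvdist (b - c) (b' - c) c
    _ ≤ Metric.diam (cell U g₀ τ w) :=
      Metric.dist_le_diam_of_mem (Bornology.IsBounded.all _) hbc hbc'
    _ < ε := hτ w

theorem stmt6_general {G : Type*} [AddCommGroup G] [MetricSpace G] [CompactSpace G]
    [IsTopologicalAddGroup G]
    (hinvdist : ∀ a b c : G, dist (a + c) (b + c) = dist a b)
    (g₀ : G) (hdense : Dense {g : G | ∃ n : ℕ, g = n • g₀})
    (U : Fin 2 → Set G) (hopen : ∀ i, IsOpen (U i)) (hdisj : Disjoint (U 0) (U 1))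
    (hbd : ∀ b ∈ (U 0 ∪ U 1)ᶜ, b ∈ closure (U 0) ∧ b ∈ closure (U 1))
    (x : Seq2) (hx : ∀ n : ℕ, n • g₀ ∈ U (x n))
    (hsep : ∀ ε : ℝ, 0 < ε → ∃ τ : Finset ℕ, ∀ w : (s : τ) → Fin 2,
      Metric.diam (⋂ s : τ, (fun u : G => u - (s : ℕ) • g₀) '' U (w s)) < ε)
    (k : ℕ)
    (F : Finset G) (hF : ↑F ⊆ (U 0 ∪ U 1)ᶜ) (hFcard : F.card = k) :
    ∃ C : ℕ, ∀ n : ℕ, 1 ≤ n → k * n ≤ pstar x n + C := by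
  obtain rfl | hFne := F.eq_empty_or_nonempty
  · exact ⟨0, fun n _ => by simp [← hFcard]⟩
  obtain ⟨ε, hε, hFε⟩ := F.finite_toSet.exists_pos_forall_eq_of_dist_lt
  obtain ⟨τ₀, hτ₀⟩ := hsep ε hε
  have hτ₀sep := isSeparatingWindow_of_diam_lt hinvdist hFε hτ₀
  refine ⟨k * #τ₀, fun n _ => ?_⟩
  obtain hn | hn := le_total n #τ₀
  · have := Nat.mul_le_mul_left k hn
    omega
  obtain ⟨τ, -, hτ, hA⟩ := exists_card_admissible_ge hopen hbd hdense hF hFne hτ₀sep (n - #τ₀)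
  calc k * n = k * (n - #τ₀) + k * #τ₀ := by rw [← mul_add, Nat.sub_add_cancel hn]
    _ ≤ pstar x n + k * #τ₀ := by
      gcongr
      calc k * (n - #τ₀) ≤ #(admissible U g₀ τ) := hFcard ▸ hA
        _ ≤ (patLang x τ).ncard := card_admissible_le_ncard_patLang hdense hopen hdisj hx τ
        _ ≤ pstar x n := by
          rw [Nat.add_sub_cancel' hn] at hτ
          exact hτ ▸ ncard_patLang_le_pstar x τ

/-- if the boundary set of the coding partition has at least `k` elements,
then `pstar x n ≥ k * n - C` for some constant `C ≥ 0` and all `n ≥ 1`. -/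
theorem stmt6 {G : Type*} [AddCommGroup G] [MetricSpace G] [CompactSpace G]
    [IsTopologicalAddGroup G]
    (hinvdist : ∀ a b c : G, dist (a + c) (b + c) = dist a b)
    (g₀ : G) (hdense : Dense {g : G | ∃ n : ℕ, g = n • g₀})
    (U : Fin 2 → Set G) (hopen : ∀ i, IsOpen (U i)) (hdisj : Disjoint (U 0) (U 1))
    (hbd : ∀ b ∈ (U 0 ∪ U 1)ᶜ, b ∈ closure (U 0) ∧ b ∈ closure (U 1))
    (x : Seq2) (hx : ∀ n : ℕ, n • g₀ ∈ U (x n))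
    (hsep : ∀ ε : ℝ, 0 < ε → ∃ τ : Finset ℕ, ∀ w : (s : τ) → Fin 2,
      Metric.diam (⋂ s : τ, (fun u : G => u - (s : ℕ) • g₀) '' U (w s)) < ε)
    (k : ℕ) (hk : 1 ≤ k)
    (F : Finset G) (hF : ↑F ⊆ (U 0 ∪ U 1)ᶜ) (hFcard : F.card = k) :
    ∃ C : ℕ, ∀ n : ℕ, 1 ≤ n → k * n ≤ pstar x n + C :=
  stmt6_general hinvdist g₀ hdense U hopen hdisj hbd x hx hsep k F hF hFcard
end

section
/- Let X ⊆ (Fin 2)^ℕ be a subshift (nonempty, closed in the product topology, and σ-invariant, where σ is the shift) and suppose X is infinite. Then there do not exist a compact metrizable topological group G, an element g₀ ∈ G, and a homeomorphism φ : X → G satisfying φ(σx) = φ(x) + g₀ for all x ∈ X. (In other words, an infinite subshift is never topologically conjugate to a group rotation.) -/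
open Set
open scoped Uniformity Topology

def shiftMap (x : Seq2) : Seq2 := fun n => x (n + 1)

/-!
A subshift is expansive, a group rotation is equicontinuous, and only a finite system is both.
Concretely, the zeroth coordinate `c a := (φ⁻¹ a) 0` is a continuous `Fin 2`-valued function on
`G`, and `c (a + m • g₀)` is the `m`-th coordinate of `φ⁻¹ a`, so the translates of `c` separate
points. On a compact group `c` is uniformly continuous, i.e. invariant under translation by a
whole neighbourhood `V` of `0`; separation forces `V = {0}`. Hence `G` is discrete and compact,
so finite, whereas `X` is infinite.
-/

theorem exists_mem_nhds_zero_forall_add_eq {G D : Type*} [AddGroup G] [TopologicalSpace G]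
    [IsTopologicalAddGroup G] [CompactSpace G] [TopologicalSpace D] [DiscreteTopology D]
    {c : G → D} (hc : Continuous c) : ∃ V ∈ 𝓝 (0 : G), ∀ v ∈ V, ∀ a, c (v + a) = c a := by
  let := IsTopologicalAddGroup.rightUniformSpace G
  have hopen : IsOpen {p : G × G | c p.1 = c p.2} :=
    (isOpen_discrete (diagonal D)).preimage (hc.prodMap hc)
  have hunif : {p : G × G | c p.1 = c p.2} ∈ 𝓤 G := by
    rw [← nhdsSet_diagonal_eq_uniformity]
    exact hopen.mem_nhdsSet.2 fun p hp => congrArg c hp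
  rw [uniformity_eq_comap_nhds_zero'] at hunif
  obtain ⟨V, hV, hsub⟩ := hunif
  exact ⟨V, hV, fun v hv a => (@hsub (a, v + a) (by simpa using hv)).symm⟩

theorem discreteTopology_of_injective_translates {G D : Type*} [AddGroup G] [TopologicalSpace G]
    [IsTopologicalAddGroup G] [CompactSpace G] [TopologicalSpace D] [DiscreteTopology D]
    {c : G → D} (hc : Continuous c) (hsep : ∀ a b, (∀ s, c (a + s) = c (b + s)) → a = b) :
    DiscreteTopology G := by
  obtain ⟨V, hV, hcV⟩ := exists_mem_nhds_zero_forall_add_eq hc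
  have hV0 : V ⊆ {0} := fun v hv => hsep v 0 fun s => by rw [zero_add, hcV v hv]
  refine discreteTopology_of_isOpen_singleton_zero (isOpen_iff_mem_nhds.2 ?_)
  rintro _ rfl
  exact Filter.mem_of_superset hV hV0

theorem Equiv.symm_apply_add_nsmul_of_semiconj {α G : Type*} [AddMonoid G] (e : α ≃ G)
    {T : α → α} {g : G} (h : Function.Semiconj e T (· + g)) (a : G) (m : ℕ) :
    e.symm (a + m • g) = T^[m] (e.symm a) := by
  rw [e.symm_apply_eq, (h.iterate_right m).eq, add_right_iterate, e.apply_symm_apply]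

theorem shiftMap_iterate_apply (m n : ℕ) (x : Seq2) : shiftMap^[m] x n = x (n + m) := by
  induction m generalizing n with
  | zero => rfl
  | succ m ih =>
    rw [Function.iterate_succ_apply', shiftMap, ih]
    exact congrArg x (by omega)

theorem stmt8_general {G : Type*} [AddCommGroup G] [TopologicalSpace G] [IsTopologicalAddGroup G]
    [CompactSpace G]
    (X : Set Seq2)
    (hinv : ∀ x ∈ X, shiftMap x ∈ X) (hinf : X.Infinite)
    (g₀ : G) (φ : X ≃ₜ G) :
    ¬ ∀ x : X, φ ⟨shiftMap x.1, hinv x.1 x.2⟩ = φ x + g₀ := by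
  intro hφ
  let T : X → X := fun x => ⟨shiftMap x.1, hinv x.1 x.2⟩
  have hTval : Function.Semiconj Subtype.val T shiftMap := fun _ => rfl
  let c : G → Fin 2 := fun a => (φ.symm a).1 0
  have hcoord : ∀ a (m : ℕ), c (a + m • g₀) = (φ.symm a).1 m := fun a m => by
    have hiter : φ.symm (a + m • g₀) = T^[m] (φ.symm a) :=
      φ.toEquiv.symm_apply_add_nsmul_of_semiconj hφ a m
    simp only [c]
    rw [hiter, (hTval.iterate_right m).eq, shiftMap_iterate_apply, zero_add]
  have hsep : ∀ a b, (∀ s, c (a + s) = c (b + s)) → a = b := fun a b h =>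
    φ.symm.injective (Subtype.ext (funext fun m => by rw [← hcoord, ← hcoord, h]))
  have : DiscreteTopology G := discreteTopology_of_injective_translates
    ((continuous_apply 0).comp (continuous_subtype_val.comp φ.symm.continuous)) hsep
  have : Finite G := finite_of_compact_of_discrete
  exact hinf (Set.finite_coe_iff.1 (Finite.of_injective φ φ.injective))

/-- an infinite subshift is never topologically conjugate to a rotation on a
compact metrizable topological group. -/
theorem stmt8 {G : Type*} [AddCommGroup G] [TopologicalSpace G] [IsTopologicalAddGroup G]
    [CompactSpace G] [TopologicalSpace.MetrizableSpace G]
    (X : Set Seq2) (hne : X.Nonempty) (hcl : IsClosed X)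
    (hinv : ∀ x ∈ X, shiftMap x ∈ X) (hinf : X.Infinite)
    (g₀ : G) (φ : X ≃ₜ G) :
    ¬ ∀ x : X, φ ⟨shiftMap x.1, hinv x.1 x.2⟩ = φ x + g₀ :=
  stmt8_general X hinv hinf g₀ φ
end

section
/- Let (n_k)_{k≥1} be a sequence of positive integers with n_k properly dividing n_{k+1} (n_k ∣ n_{k+1} and n_k < n_{k+1}) for all k ≥ 1, and let a : ℕ → Fin 2. Suppose x : ℕ → Fin 2 is pattern Sturmian and satisfies: for every k ≥ 1 and every m ≥ 1, if n_k divides m and n_{k+1} does not divide m, then x(m) = a_k. Let 1 ≤ c < d < e < f < g < h be indices with a_c = a_e = a_g = 0 and a_d = a_f = a_h = 1. Then for the window τ = {0, n_e, n_f}, the τ-language of x, written as triples (w(0), w(n_e), w(n_f)), is exactly {(0,0,0), (0,0,1), (0,1,0), (1,0,0), (1,0,1), (1,1,1)}. -/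
open Set

def PatternSturmian (x : Seq2) : Prop := ∀ n : ℕ, 1 ≤ n → pstar x n = 2 * n

/-!
Each of the six triples is realised at an explicit position (`nk g - nk e`, `nk g`,
`nk f - nk e`, `nk g - nk f`, `nk h`, `nk d`): a position `N ± nk k` with `nk (k + 1) ∣ N`
is divisible by `nk k` but not by `nk (k + 1)`, so it carries the symbol `a k`.
Conversely, a pattern Sturmian sequence has at most `2 · 3 = 6` patterns on any window of
size three, so no other triple occurs.
-/

section DivisibilityChain

variable {nk : ℕ → ℕ}

theorem chain_dvd_of_le (hs : ∀ k : ℕ, 1 ≤ k → nk k ∣ nk (k + 1))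
    {i j : ℕ} (hi : 1 ≤ i) (hij : i ≤ j) : nk i ∣ nk j := by
  induction j, hij using Nat.le_induction with
  | base => exact dvd_rfl
  | succ j hij ih => exact ih.trans (hs j (hi.trans hij))

theorem chain_lt_of_lt (hs : ∀ k : ℕ, 1 ≤ k → nk k < nk (k + 1))
    {i j : ℕ} (hi : 1 ≤ i) (hij : i < j) : nk i < nk j := by
  induction j, hij using Nat.le_induction with
  | base => exact hs i hi
  | succ j hij ih => exact ih.trans (hs j (by omega))

variable {a : ℕ → Fin 2} {x : Seq2}

theorem apply_add_eq_of_dvd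
    (hs : ∀ k : ℕ, 1 ≤ k → 1 ≤ nk k ∧ nk k ∣ nk (k + 1) ∧ nk k < nk (k + 1))
    (hx : ∀ k : ℕ, 1 ≤ k → ∀ m : ℕ, 1 ≤ m → nk k ∣ m → ¬ nk (k + 1) ∣ m → x m = a k)
    {k N : ℕ} (hk : 1 ≤ k) (hN : nk (k + 1) ∣ N) : x (N + nk k) = a k := by
  obtain ⟨hpos, hdvd, hlt⟩ := hs k hk
  refine hx k hk _ (by omega) ((hdvd.trans hN).add dvd_rfl) fun h => ?_
  exact Nat.not_dvd_of_pos_of_lt hpos hlt ((Nat.dvd_add_right hN).mp h)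

theorem apply_sub_eq_of_dvd
    (hs : ∀ k : ℕ, 1 ≤ k → 1 ≤ nk k ∧ nk k ∣ nk (k + 1) ∧ nk k < nk (k + 1))
    (hx : ∀ k : ℕ, 1 ≤ k → ∀ m : ℕ, 1 ≤ m → nk k ∣ m → ¬ nk (k + 1) ∣ m → x m = a k)
    {k N : ℕ} (hk : 1 ≤ k) (hN : nk (k + 1) ∣ N) (hN0 : 0 < N) : x (N - nk k) = a k := by
  obtain ⟨hpos, hdvd, hlt⟩ := hs k hk
  have hle : nk (k + 1) ≤ N := Nat.le_of_dvd hN0 hN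
  refine hx k hk _ (by omega) (Nat.dvd_sub (hdvd.trans hN) dvd_rfl) fun h => ?_
  have hdiv := Nat.dvd_sub hN h
  rw [Nat.sub_sub_self (by omega)] at hdiv
  exact Nat.not_dvd_of_pos_of_lt hpos hlt hdiv

theorem apply_eq
    (hs : ∀ k : ℕ, 1 ≤ k → 1 ≤ nk k ∧ nk k ∣ nk (k + 1) ∧ nk k < nk (k + 1))
    (hx : ∀ k : ℕ, 1 ≤ k → ∀ m : ℕ, 1 ≤ m → nk k ∣ m → ¬ nk (k + 1) ∣ m → x m = a k)
    {k : ℕ} (hk : 1 ≤ k) : x (nk k) = a k := by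
  simpa using apply_add_eq_of_dvd hs hx hk (dvd_zero _)

end DivisibilityChain

theorem patLang_ncard_le_pow (x : Seq2) (τ : Finset ℕ) : (patLang x τ).ncard ≤ 2 ^ τ.card :=
  calc (patLang x τ).ncard ≤ Nat.card ((s : τ) → Fin 2) := Set.ncard_le_card _
    _ = 2 ^ τ.card := by simp [Nat.card_eq_fintype_card]

theorem patLang_ncard_le_pstar (x : Seq2) (τ : Finset ℕ) :
    (patLang x τ).ncard ≤ pstar x τ.card :=
  le_csSup ⟨2 ^ τ.card, by rintro _ ⟨σ, hσ, rfl⟩; exact hσ ▸ patLang_ncard_le_pow x σ⟩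
    ⟨τ, rfl, rfl⟩

theorem PatternSturmian.ncard_triples_le {x : Seq2} (hx : PatternSturmian x) {p q : ℕ}
    (hp : 0 < p) (hpq : p < q) :
    {t : Fin 2 × Fin 2 × Fin 2 | ∃ m : ℕ, t = (x m, x (m + p), x (m + q))}.ncard ≤ 6 := by
  set τ : Finset ℕ := {0, p, q}
  have hτ : τ.card = 3 := by
    rw [Finset.card_insert_of_notMem (by simp; omega), Finset.card_pair (by omega)]
  let φ : ((s : τ) → Fin 2) → Fin 2 × Fin 2 × Fin 2 :=
    fun w => (w ⟨0, by simp [τ]⟩, w ⟨p, by simp [τ]⟩, w ⟨q, by simp [τ]⟩)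
  have hsub : {t : Fin 2 × Fin 2 × Fin 2 | ∃ m : ℕ, t = (x m, x (m + p), x (m + q))} ⊆
      φ '' patLang x τ := by
    rintro _ ⟨m, rfl⟩
    exact ⟨fun s => x (m + s), ⟨m, fun _ => rfl⟩, by simp [φ]⟩
  calc _ ≤ (φ '' patLang x τ).ncard := Set.ncard_le_ncard hsub (Set.toFinite _)
    _ ≤ (patLang x τ).ncard := Set.ncard_image_le (Set.toFinite _)
    _ ≤ pstar x τ.card := patLang_ncard_le_pstar x τ
    _ = 6 := by rw [hτ, hx 3 (by norm_num)]

theorem triples_subset_language {nk : ℕ → ℕ}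
    (hs : ∀ k : ℕ, 1 ≤ k → 1 ≤ nk k ∧ nk k ∣ nk (k + 1) ∧ nk k < nk (k + 1))
    {a : ℕ → Fin 2} {x : Seq2}
    (hx : ∀ k : ℕ, 1 ≤ k → ∀ m : ℕ, 1 ≤ m → nk k ∣ m → ¬ nk (k + 1) ∣ m → x m = a k)
    {d e f g h : ℕ} (hd : 1 ≤ d) (hde : d < e) (hef : e < f) (hfg : f < g) (hgh : g < h)
    (hae : a e = 0) (hag : a g = 0) (had : a d = 1) (haf : a f = 1) (hah : a h = 1) :
    ({(0, 0, 0), (0, 0, 1), (0, 1, 0), (1, 0, 0), (1, 0, 1), (1, 1, 1)} :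
        Set (Fin 2 × Fin 2 × Fin 2)) ⊆
      {t | ∃ m : ℕ, t = (x m, x (m + nk e), x (m + nk f))} := by
  have hN (i j : ℕ) (hij : i < j) : nk (i + 1) ∣ nk j :=
    chain_dvd_of_le (fun k hk => (hs k hk).2.1) (by omega) hij
  have hadd (k N : ℕ) (hk : d ≤ k) : nk (k + 1) ∣ N → x (N + nk k) = a k :=
    apply_add_eq_of_dvd hs hx (by omega)
  have hsub (k N : ℕ) (hk : d ≤ k) : nk (k + 1) ∣ N → 0 < N → x (N - nk k) = a k :=
    apply_sub_eq_of_dvd hs hx (by omega)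
  have hval (k : ℕ) (hk : d ≤ k) : x (nk k) = a k := apply_eq hs hx (by omega)
  have hfpos : 0 < nk f := (hs f (by omega)).1
  have hgpos : 0 < nk g := (hs g (by omega)).1
  have hef' : nk e < nk f := chain_lt_of_lt (fun k hk => (hs k hk).2.2) (by omega) hef
  have hfg' : nk f < nk g := chain_lt_of_lt (fun k hk => (hs k hk).2.2) (by omega) hfg
  intro t ht
  simp only [mem_insert_iff, mem_singleton_iff] at ht
  rcases ht with rfl | rfl | rfl | rfl | rfl | rfl
  · refine ⟨nk g - nk e, ?_⟩
    rw [Nat.sub_add_cancel (by omega), show nk g - nk e + nk f = nk g + nk f - nk e by omega,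
      hsub e _ hde.le (hN e g (by omega)) hgpos, hval g (by omega),
      hsub e _ hde.le ((hN e g (by omega)).add (hN e f hef)) (by omega), hae, hag]
  · refine ⟨nk g, ?_⟩
    rw [hval g (by omega), hadd e _ hde.le (hN e g (by omega)),
      hadd f _ (by omega) (hN f g hfg), hag, hae, haf]
  · refine ⟨nk f - nk e, ?_⟩
    rw [Nat.sub_add_cancel hef'.le, show nk f - nk e + nk f = nk f + nk f - nk e by omega,
      hsub e _ hde.le (hN e f hef) hfpos, hval f (by omega),
      hsub e _ hde.le ((hN e f hef).add (hN e f hef)) (by omega), hae, haf]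
  · refine ⟨nk g - nk f, ?_⟩
    rw [Nat.sub_add_cancel hfg'.le, hsub f _ (by omega) (hN f g hfg) hgpos,
      hadd e _ hde.le (Nat.dvd_sub (hN e g (by omega)) (hN e f hef)), hval g (by omega),
      haf, hae, hag]
  · refine ⟨nk h, ?_⟩
    rw [hval h (by omega), hadd e _ hde.le (hN e h (by omega)),
      hadd f _ (by omega) (hN f h (by omega)), hah, hae, haf]
  · refine ⟨nk d, ?_⟩
    rw [add_comm (nk d) (nk e), hadd d _ le_rfl (hN d e hde), add_comm (nk d) (nk f),
      hadd d _ le_rfl (hN d f (by omega)), hval d le_rfl, had]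

theorem stmt11_general (nk : ℕ → ℕ)
    (hstruct : ∀ k : ℕ, 1 ≤ k → 1 ≤ nk k ∧ nk k ∣ nk (k + 1) ∧ nk k < nk (k + 1))
    (a : ℕ → Fin 2) (x : Seq2) (hps : PatternSturmian x)
    (hx : ∀ k : ℕ, 1 ≤ k → ∀ m : ℕ, 1 ≤ m → nk k ∣ m → ¬ nk (k + 1) ∣ m → x m = a k)
    (c d e f g h : ℕ)
    (hcd : 1 ≤ c ∧ c < d ∧ d < e ∧ e < f ∧ f < g ∧ g < h)
    (hae : a e = 0) (hag : a g = 0)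
    (had : a d = 1) (haf : a f = 1) (hah : a h = 1) :
    {p : Fin 2 × Fin 2 × Fin 2 | ∃ m : ℕ, p = (x m, x (m + nk e), x (m + nk f))} =
      {(0, 0, 0), (0, 0, 1), (0, 1, 0), (1, 0, 0), (1, 0, 1), (1, 1, 1)} := by
  obtain ⟨hc, hcd, hde, hef, hfg, hgh⟩ := hcd
  have hsub := triples_subset_language hstruct hx (by omega) hde hef hfg hgh hae hag had haf hah
  have hef' : nk e < nk f := chain_lt_of_lt (fun k hk => (hstruct k hk).2.2) (by omega) hef
  refine (Set.eq_of_subset_of_ncard_le hsub ?_ (Set.toFinite _)).symm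
  calc _ ≤ 6 := hps.ncard_triples_le (hstruct e (by omega)).1 hef'
    _ = _ := by rw [Set.ncard_eq_toFinset_card']; rfl

/-- the `{0, n_e, n_f}`-language of a simple 1-hole Toeplitz-like pattern
Sturmian sequence, written as triples `(x m, x (m + n_e), x (m + n_f))`, is exactly
`{000, 001, 010, 100, 101, 111}` (Lemma 4.8 of the paper). -/
theorem stmt11 (nk : ℕ → ℕ)
    (hstruct : ∀ k : ℕ, 1 ≤ k → 1 ≤ nk k ∧ nk k ∣ nk (k + 1) ∧ nk k < nk (k + 1))
    (a : ℕ → Fin 2) (x : Seq2) (hps : PatternSturmian x)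
    (hx : ∀ k : ℕ, 1 ≤ k → ∀ m : ℕ, 1 ≤ m → nk k ∣ m → ¬ nk (k + 1) ∣ m → x m = a k)
    (c d e f g h : ℕ)
    (hcd : 1 ≤ c ∧ c < d ∧ d < e ∧ e < f ∧ f < g ∧ g < h)
    (hac : a c = 0) (hae : a e = 0) (hag : a g = 0)
    (had : a d = 1) (haf : a f = 1) (hah : a h = 1) :
    {p : Fin 2 × Fin 2 × Fin 2 | ∃ m : ℕ, p = (x m, x (m + nk e), x (m + nk f))} =
      {(0, 0, 0), (0, 0, 1), (0, 1, 0), (1, 0, 0), (1, 0, 1), (1, 1, 1)} :=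
  stmt11_general nk hstruct a x hps hx c d e f g h hcd hae hag had haf hah
end

section
/- Let I and J be nonempty intervals of 𝕋 = ℝ/ℤ and let α be irrational. Suppose that for every L ∈ ℕ there exists a ∈ ℕ such that 1_I(nα mod 1) = 1_J(nα mod 1) for all n with a ≤ n < a + L (i.e., the two coding sequences agree on arbitrarily long intervals of ℕ). Then the symmetric difference (I ∖ J) ∪ (J ∖ I) has empty interior in 𝕋; that is, I = J except possibly at the endpoints. -/
open Set

abbrev T1 := AddCircle (1 : ℝ)

def IsArc (I : Set T1) : Prop :=
  ∃ a b : ℝ, b - a ≤ 1 ∧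
    (I = (fun r : ℝ => (r : T1)) '' Set.Icc a b ∨
     I = (fun r : ℝ => (r : T1)) '' Set.Ico a b ∨
     I = (fun r : ℝ => (r : T1)) '' Set.Ioc a b ∨
     I = (fun r : ℝ => (r : T1)) '' Set.Ioo a b)

/-!
The orbit `n • α` of an irrational rotation is dense in the compact circle, so by compactness
every nonempty open set `U` is met by `n • α` within every window `a ≤ n < a + L` of some fixed
length `L`. Taking for `U` the interior of `(I \ J) ∪ (J \ I)`, a window on which the codings of
`I` and `J` agree would contain a time at which they differ.
-/

/-- Finitely many of the open sets `{y | y + n • ξ ∈ U}` cover the compact group, and the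
largest `n` among them bounds the gaps between visits of `n • ξ` to `U`. -/
theorem DenseRange.exists_forall_exists_nsmul_mem_of_isOpen {G : Type*} [AddGroup G]
    [TopologicalSpace G] [ContinuousAdd G] [CompactSpace G] {ξ : G}
    (hξ : DenseRange fun n : ℕ => n • ξ) {U : Set G} (hU : IsOpen U) (hUne : U.Nonempty) :
    ∃ L : ℕ, ∀ a : ℕ, ∃ n, a ≤ n ∧ n < a + L ∧ n • ξ ∈ U := by
  have hcover : univ ⊆ ⋃ n : ℕ, (· + n • ξ) ⁻¹' U := fun y _ => by
    obtain ⟨u, hu⟩ := hUne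
    obtain ⟨n, hn⟩ := hξ.exists_mem_open (hU.preimage (continuous_const_add y))
      ⟨-y + u, by simpa using hu⟩
    exact mem_iUnion.2 ⟨n, hn⟩
  obtain ⟨s, hs⟩ := isCompact_univ.elim_finite_subcover _
    (fun n => hU.preimage (continuous_add_const _)) hcover
  refine ⟨s.sup id + 1, fun a => ?_⟩
  obtain ⟨n, hn, hmem⟩ := mem_iUnion₂.1 (hs (mem_univ (a • ξ)))
  have hn_le : n ≤ s.sup id := Finset.le_sup (f := id) hn
  exact ⟨a + n, by omega, by omega, by rwa [add_nsmul]⟩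

theorem AddCircle.denseRange_nsmul_coe {p a : ℝ} [Fact (0 < p)] (h : Irrational (a / p)) :
    DenseRange fun n : ℕ => n • (a : AddCircle p) :=
  denseRange_zsmul_iff_nsmul.1 (denseRange_zsmul_coe_iff.2 h)

theorem stmt13_general (I J : Set T1)
    (α : ℝ) (hα : Irrational α)
    (hagree : ∀ L : ℕ, ∃ a : ℕ, ∀ n : ℕ, a ≤ n → n < a + L →
      ((((n : ℝ) * α : ℝ) : T1) ∈ I ↔ (((n : ℝ) * α : ℝ) : T1) ∈ J)) :
    interior ((I \ J) ∪ (J \ I)) = ∅ := by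
  by_contra hne
  obtain ⟨L, hL⟩ := (AddCircle.denseRange_nsmul_coe (p := 1) (by simpa using hα))
    |>.exists_forall_exists_nsmul_mem_of_isOpen isOpen_interior (nonempty_iff_ne_empty.2 hne)
  obtain ⟨a, ha⟩ := hagree L
  obtain ⟨n, han, hnL, hn⟩ := hL a
  rw [← AddCircle.coe_nsmul, nsmul_eq_mul] at hn
  have hcode := ha n han hnL
  rcases interior_subset hn with ⟨hI, hJ⟩ | ⟨hJ, hI⟩ <;> tauto

/-- if the coding sequences of two nonempty intervals under the same
irrational rotation agree on arbitrarily long intervals of `ℕ`, then the intervals agree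
except possibly at the endpoints, i.e. the symmetric difference has empty interior. -/
theorem stmt13 (I J : Set T1) (hI : IsArc I) (hJ : IsArc J)
    (hIne : I.Nonempty) (hJne : J.Nonempty)
    (α : ℝ) (hα : Irrational α)
    (hagree : ∀ L : ℕ, ∃ a : ℕ, ∀ n : ℕ, a ≤ n → n < a + L →
      ((((n : ℝ) * α : ℝ) : T1) ∈ I ↔ (((n : ℝ) * α : ℝ) : T1) ∈ J)) :
    interior ((I \ J) ∪ (J \ I)) = ∅ :=
  stmt13_general I J α hα hagree
end
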